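/- arXiv:1804.06952 — 4 statements merged into one kernel-verified Lean document; each statement's English description precedes it below -/
import Mathlib

section
/- For every α ∈ (0,1) there exists a constant c_α > 0 such that for all positive integers k, ℓ, n, any ℓ-bit public-coin SMP α-simulation of distributions on [k] with n players must satisfy n ≥ c_α · k/2^ℓ. -/
/-!
Take `p` uniform on `[k]`. If no player's sample is alone in its fiber under that player's
message map, then every sample equal to a given `x` can be swapped for another sample with the
same message, so the messages could also have come from the uniform distribution on `[k] ∖ {x}`,
under which exactness forces the referee never to output `x`. So the referee outputs a symbol
only when some player's sample lies in a singleton fiber. A message map has at most `2^ℓ`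
singleton fibers, so this happens with probability at most `n 2^ℓ / k`, and it must happen with
probability at least `1 - α`.
-/

open scoped BigOperators ENNReal

/-- Output distribution of a public-coin SMP simulation protocol: seed distribution `ν`,
message maps `π`, referee rule `δ`; i.i.d. samples from `p`. -/
noncomputable def simOut {k l n : ℕ} {U : Type} (ν : PMF U)
    (π : Fin n → U → Fin k → Fin (2 ^ l))
    (δ : U → (Fin n → Fin (2 ^ l)) → PMF (Option (Fin k)))
    (p : PMF (Fin k)) (o : Option (Fin k)) : ℝ≥0∞ :=
  ∑' u : U, ν u * ∑ xs : Fin n → Fin k,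
    (∏ j : Fin n, p (xs j)) * δ u (fun j => π j u (xs j)) o

open Finset

section SingletonFiber

variable {α β : Type*}

def IsSingletonFiber (f : α → β) (a : α) : Prop := ∀ b, f b = f a → b = a

theorem card_filter_isSingletonFiber_le [Fintype α] [Fintype β] (f : α → β)
    [DecidablePred (IsSingletonFiber f)] :
    #{a | IsSingletonFiber f a} ≤ Fintype.card β := by
  refine (card_le_card_of_injOn f (fun a _ => mem_univ (f a)) fun a _ b hb hab => ?_).trans_eq
    card_univ
  exact (mem_filter.1 hb).2 a hab

end SingletonFiber

theorem PMF.sum_coe_eq_one {α : Type*} [Fintype α] (p : PMF α) : ∑ a, p a = 1 :=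
  (tsum_fintype (fun a => p a)).symm.trans p.tsum_coe

theorem PMF.sum_pi_prod_mul_eval {α ι : Type*} [Fintype α] [Fintype ι] [DecidableEq ι]
    (p : PMF α) (g : α → ℝ≥0∞) (j : ι) :
    ∑ xs : ι → α, (∏ i, p (xs i)) * g (xs j) = ∑ a, p a * g a := by
  calc ∑ xs : ι → α, (∏ i, p (xs i)) * g (xs j)
      = ∑ xs : ι → α, ∏ i, p (xs i) * (if i = j then g (xs i) else 1) := by
        refine sum_congr rfl fun xs _ => ?_
        rw [prod_mul_distrib, prod_ite_eq' univ j, if_pos (mem_univ j)]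
    _ = ∏ i, ∑ a, p a * (if i = j then g a else 1) :=
        (Fintype.prod_sum fun i a => p a * (if i = j then g a else 1)).symm
    _ = ∑ a, p a * g a := by
        rw [prod_eq_single j (fun i _ hij => by simp [hij, p.sum_coe_eq_one]) (by simp)]
        simp

section Protocol

variable {k l n : ℕ} {U : Type} {ν : PMF U} {π : Fin n → U → Fin k → Fin (2 ^ l)}
  {δ : U → (Fin n → Fin (2 ^ l)) → PMF (Option (Fin k))}

def IsConditionallyExact (ν : PMF U) (π : Fin n → U → Fin k → Fin (2 ^ l))
    (δ : U → (Fin n → Fin (2 ^ l)) → PMF (Option (Fin k))) : Prop :=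
  ∀ (p : PMF (Fin k)) (x : Fin k), simOut ν π δ p (some x) = (1 - simOut ν π δ p none) * p x

theorem IsConditionallyExact.sum_simOut_some (hsim : IsConditionallyExact ν π δ)
    (p : PMF (Fin k)) : ∑ x, simOut ν π δ p (some x) = 1 - simOut ν π δ p none := by
  simp only [hsim p, ← mul_sum, p.sum_coe_eq_one, mul_one]

theorem IsConditionallyExact.referee_eq_zero_of_apply_eq_zero (hsim : IsConditionallyExact ν π δ)
    {p : PMF (Fin k)} {x : Fin k} (hx : p x = 0) {u : U} (hu : ν u ≠ 0) {ys : Fin n → Fin k}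
    (hys : ∀ j, p (ys j) ≠ 0) : δ u (fun j => π j u (ys j)) (some x) = 0 := by
  have h0 : simOut ν π δ p (some x) = 0 := by rw [hsim p x, hx, mul_zero]
  simp only [simOut, ENNReal.tsum_eq_zero, mul_eq_zero, sum_eq_zero_iff, mem_univ,
    true_implies, prod_eq_zero_iff] at h0
  exact ((h0 u).resolve_left hu ys).resolve_left fun ⟨j, _, hj⟩ => hys j hj

theorem IsConditionallyExact.referee_eq_zero_of_forall_not_isSingletonFiber
    (hsim : IsConditionallyExact ν π δ) {u : U} (hu : ν u ≠ 0) (j₀ : Fin n)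
    {xs : Fin n → Fin k} (hxs : ∀ j, ¬ IsSingletonFiber (π j u) (xs j)) (x : Fin k) :
    δ u (fun j => π j u (xs j)) (some x) = 0 := by
  have hmove : ∀ j, ∃ y, y ≠ x ∧ π j u y = π j u (xs j) := by
    intro j
    by_cases hxj : xs j = x
    · obtain ⟨y, hy, hyx⟩ : ∃ y, π j u y = π j u (xs j) ∧ y ≠ xs j := by
        simpa [IsSingletonFiber] using hxs j
      exact ⟨y, hxj ▸ hyx, hy⟩
    · exact ⟨xs j, hxj, rfl⟩
  choose ys hys hmsg using hmove
  have hS : ({x}ᶜ : Finset (Fin k)).Nonempty := ⟨ys j₀, by simpa using hys j₀⟩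
  rw [← funext hmsg]
  refine hsim.referee_eq_zero_of_apply_eq_zero (p := PMF.uniformOfFinset _ hS)
    (PMF.uniformOfFinset_apply_of_notMem hS (by simp)) hu fun j => ?_
  simpa [← PMF.mem_support_iff] using hys j

open Classical in
theorem IsConditionallyExact.sum_referee_some_le_card (hsim : IsConditionallyExact ν π δ)
    (hn : 0 < n) {u : U} (hu : ν u ≠ 0) (xs : Fin n → Fin k) :
    ∑ x, δ u (fun j => π j u (xs j)) (some x) ≤ #{j | IsSingletonFiber (π j u) (xs j)} := by
  by_cases hsing : ∃ j, IsSingletonFiber (π j u) (xs j)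
  · obtain ⟨j, hj⟩ := hsing
    calc ∑ x, δ u (fun j => π j u (xs j)) (some x)
        ≤ ∑ o, δ u (fun j => π j u (xs j)) o := by
          rw [Fintype.sum_option]; exact le_add_self
      _ = 1 := (δ u _).sum_coe_eq_one
      _ ≤ #{j | IsSingletonFiber (π j u) (xs j)} :=
          Nat.one_le_cast.2 (card_pos.2 ⟨j, by simpa using hj⟩)
  · simp [hsim.referee_eq_zero_of_forall_not_isSingletonFiber hu ⟨0, hn⟩ (not_exists.1 hsing)]

open Classical in
theorem IsConditionallyExact.sum_simOut_some_le (hsim : IsConditionallyExact ν π δ)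
    (hn : 0 < n) (p : PMF (Fin k)) :
    ∑ x, simOut ν π δ p (some x) ≤
      ∑' u, ν u * ∑ j, ∑ z with IsSingletonFiber (π j u) z, p z := by
  simp only [simOut]
  rw [← Summable.tsum_finsetSum fun _ _ => ENNReal.summable]
  refine ENNReal.tsum_le_tsum fun u => ?_
  rcases eq_or_ne (ν u) 0 with hu | hu
  · simp [hu]
  calc ∑ x, ν u * ∑ xs : Fin n → Fin k, (∏ j, p (xs j)) * δ u (fun j => π j u (xs j)) (some x)
      = ν u * ∑ xs : Fin n → Fin k,
          (∏ j, p (xs j)) * ∑ x, δ u (fun j => π j u (xs j)) (some x) := by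
        rw [← mul_sum, sum_comm]
        simp only [mul_sum]
    _ ≤ ν u * ∑ xs : Fin n → Fin k,
          (∏ j, p (xs j)) * (#{j | IsSingletonFiber (π j u) (xs j)} : ℝ≥0∞) := by
        gcongr with xs
        exact hsim.sum_referee_some_le_card hn hu xs
    _ = ν u * ∑ j, ∑ z with IsSingletonFiber (π j u) z, p z := by
        congr 1
        simp only [natCast_card_filter, mul_sum]
        rw [sum_comm]
        refine sum_congr rfl fun j _ => ?_
        rw [p.sum_pi_prod_mul_eval (fun z => if IsSingletonFiber (π j u) z then 1 else 0),
          sum_filter]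
        simp only [mul_boole]

theorem IsConditionallyExact.one_sub_simOut_uniformOfFintype_none_le [NeZero k]
    (hsim : IsConditionallyExact ν π δ) (hn : 0 < n) :
    1 - simOut ν π δ (PMF.uniformOfFintype (Fin k)) none ≤ n * 2 ^ l / k := by
  classical
  have hcells : ∀ u j, ∑ z with IsSingletonFiber (π j u) z, PMF.uniformOfFintype (Fin k) z ≤
      2 ^ l / k := by
    intro u j
    simp only [PMF.uniformOfFintype_apply, Fintype.card_fin, sum_const, nsmul_eq_mul,
      div_eq_mul_inv]
    gcongr
    exact_mod_cast (card_filter_isSingletonFiber_le (π j u)).trans_eq (Fintype.card_fin _)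
  rw [← hsim.sum_simOut_some]
  calc ∑ x, simOut ν π δ (PMF.uniformOfFintype (Fin k)) (some x)
      ≤ ∑' u, ν u * ∑ j, ∑ z with IsSingletonFiber (π j u) z, PMF.uniformOfFintype (Fin k) z :=
        hsim.sum_simOut_some_le hn _
    _ ≤ ∑' u, ν u * (n * (2 ^ l / k)) := by
        gcongr with u
        simpa using sum_le_sum fun j (_ : j ∈ univ) => hcells u j
    _ = n * 2 ^ l / k := by rw [ENNReal.tsum_mul_right, ν.tsum_coe, one_mul, mul_div_assoc]

end Protocol

/-- For every `α ∈ (0,1)` there is a constant `c_α > 0` such that any ℓ-bit public-coin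
SMP `α`-simulation of distributions on `[k]` with `n` players (abort probability at most `α`,
and conditioned on not aborting the output is distributed exactly as `p`) must satisfy
`n ≥ c_α·k/2^ℓ`. -/
theorem alpha_simulation_lower_bound (α : ℝ) (hα0 : 0 < α) (hα1 : α < 1) :
    ∃ c : ℝ, 0 < c ∧
      ∀ (k l n : ℕ), 0 < k → 0 < l → 0 < n →
        ∀ (U : Type) (ν : PMF U)
          (π : Fin n → U → Fin k → Fin (2 ^ l))
          (δ : U → (Fin n → Fin (2 ^ l)) → PMF (Option (Fin k))),
          (∀ p : PMF (Fin k),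
            simOut ν π δ p none ≤ ENNReal.ofReal α ∧
            ∀ x : Fin k, simOut ν π δ p (some x) = (1 - simOut ν π δ p none) * p x) →
          c * k / (2 : ℝ) ^ l ≤ (n : ℝ) := by
  refine ⟨1 - α, sub_pos.2 hα1, fun k l n hk _ hn U ν π δ hsim => ?_⟩
  have : NeZero k := ⟨hk.ne'⟩
  have hexact : IsConditionallyExact ν π δ := fun p => (hsim p).2
  have key : ENNReal.ofReal (1 - α) ≤ ENNReal.ofReal (n * 2 ^ l / k) :=
    calc ENNReal.ofReal (1 - α) = 1 - ENNReal.ofReal α := by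
          rw [ENNReal.ofReal_sub _ hα0.le, ENNReal.ofReal_one]
      _ ≤ 1 - simOut ν π δ (PMF.uniformOfFintype (Fin k)) none :=
          tsub_le_tsub_left (hsim _).1 1
      _ ≤ n * 2 ^ l / k := hexact.one_sub_simOut_uniformOfFintype_none_le hn
      _ = ENNReal.ofReal (n * 2 ^ l / k) := by
          rw [ENNReal.ofReal_div_of_pos (by positivity), ENNReal.ofReal_mul (by positivity),
            ENNReal.ofReal_pow zero_le_two]
          simp
  have hreal := (ENNReal.ofReal_le_ofReal_iff (by positivity)).1 key
  rw [le_div_iff₀ (by positivity)] at hreal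
  rw [div_le_iff₀ (by positivity)]
  linarith
end

section
/- Let k, L be integers with 2 ≤ L ≤ k and L dividing k, and let δ : Fin k → ℝ satisfy ∑_{i=1}^k δ_i = 0. Let f be a uniformly random balanced L-coloring of [k] and set Z_r = ∑_{i : f(i)=r} δ_i for r ∈ [L]. Then for every r ∈ [L]: E[Z_r] = 0 and Var(Z_r) = E[Z_r²] = (1/L)·‖δ‖₂²·(1 − 1/L + (L−1)/(L(k−1))) ≥ ‖δ‖₂²/(2L). Consequently, E[‖Z‖₂²] = ∑_{r=1}^L E[Z_r²] ≥ ‖δ‖₂²/2. -/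
open scoped BigOperators Classical

/-- The finite set of balanced `L`-colorings of `[k]`: functions `Fin k → Fin L` each of
whose fibers has exactly `k / L` elements. -/
noncomputable def balancedColorings (k L : ℕ) : Finset (Fin k → Fin L) :=
  Finset.univ.filter fun f =>
    ∀ r : Fin L, (Finset.univ.filter fun i => f i = r).card = k / L

/-- For a coloring `f` and weights `δ`, `partSum δ f r = ∑_{i : f i = r} δ_i`. -/
noncomputable def partSum {k L : ℕ} (δ : Fin k → ℝ) (f : Fin k → Fin L) (r : Fin L) : ℝ :=
  ∑ i ∈ Finset.univ.filter (fun i => f i = r), δ i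

/-! Balanced colorings are invariant under permutations of `[k]`, so `P(f i = r) = p` and
`P(f i = r ∧ f j = r) = q` (for `i ≠ j`) do not depend on `i, j`. Expanding the moments gives
`E[Z_r] = p ∑ δ = 0` and `E[Z_r²] = (p - q) ‖δ‖² + q (∑ δ)² = (p - q) ‖δ‖²`. For `δ ≡ 1` the
fiber sum `Z_r = k / L` is deterministic, and the same two identities determine `p = 1 / L` and
`q`, hence the constant; it is at least `1 / (2L)` because `L ≥ 2`, and summing over `r` gives
the bound on `E ‖Z‖²`. -/

open Finset

section PermInvariant

variable {ι α : Type*}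

def IsPermInvariant (S : Finset (ι → α)) : Prop :=
  ∀ σ : Equiv.Perm ι, ∀ f ∈ S, f ∘ σ ∈ S

variable {S : Finset (ι → α)}

theorem IsPermInvariant.card_filter_comp (hS : IsPermInvariant S) (σ : Equiv.Perm ι)
    (P : (ι → α) → Prop) [DecidablePred P] :
    #{f ∈ S | P (f ∘ σ)} = #{f ∈ S | P f} := by
  refine card_nbij' (· ∘ σ) (· ∘ σ.symm) (fun f hf ↦ ?_) (fun f hf ↦ ?_) (fun f _ ↦ ?_)
    (fun f _ ↦ ?_)
  · simp only [coe_filter, Set.mem_ofPred_eq] at hf ⊢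
    exact ⟨hS σ f hf.1, hf.2⟩
  · simp only [coe_filter, Set.mem_ofPred_eq] at hf ⊢
    simpa [Function.comp_assoc] using ⟨hS σ.symm f hf.1, hf.2⟩
  all_goals ext; simp

theorem IsPermInvariant.card_filter_apply_eq [DecidableEq ι] [DecidableEq α]
    (hS : IsPermInvariant S) (a : α) (i j : ι) :
    #{f ∈ S | f i = a} = #{f ∈ S | f j = a} := by
  simpa using hS.card_filter_comp (Equiv.swap i j) (fun f ↦ f j = a)

theorem IsPermInvariant.card_filter_apply_eq_and_apply_eq [DecidableEq α]
    (hS : IsPermInvariant S) (a : α) {i j i' j' : ι} (hij : i ≠ j) (hij' : i' ≠ j') :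
    #{f ∈ S | f i = a ∧ f j = a} = #{f ∈ S | f i' = a ∧ f j' = a} := by
  obtain ⟨σ, hi, hj⟩ := MulAction.is_two_pretransitive_iff.mp
    (Equiv.Perm.isMultiplyPretransitive ι 2) hij' hij
  rw [Equiv.Perm.smul_def] at hi hj
  simpa [hi, hj] using hS.card_filter_comp σ (fun f ↦ f i' = a ∧ f j' = a)

theorem sum_sum_filter_eq_sum_card_mul [Fintype ι] [DecidableEq α] (S : Finset (ι → α))
    (a : α) (δ : ι → ℝ) :
    ∑ f ∈ S, ∑ i with f i = a, δ i = ∑ i, #{f ∈ S | f i = a} * δ i := by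
  simp_rw [sum_filter]
  rw [sum_comm]
  refine sum_congr rfl fun i _ ↦ ?_
  rw [← sum_filter, sum_const, nsmul_eq_mul]

theorem sum_sq_sum_filter_eq_sum_sum_card_mul [Fintype ι] [DecidableEq α]
    (S : Finset (ι → α)) (a : α) (δ : ι → ℝ) :
    ∑ f ∈ S, (∑ i with f i = a, δ i) ^ 2
      = ∑ i, ∑ j, #{f ∈ S | f i = a ∧ f j = a} * (δ i * δ j) := by
  simp_rw [sum_filter, sq, sum_mul_sum, ite_zero_mul_ite_zero]
  rw [sum_comm]
  refine sum_congr rfl fun i _ ↦ ?_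
  rw [sum_comm]
  refine sum_congr rfl fun j _ ↦ ?_
  rw [← sum_filter, sum_const, nsmul_eq_mul]

theorem sum_sum_ite_mul_mul_eq [Fintype ι] [DecidableEq ι] (p q : ℝ) (δ : ι → ℝ) :
    ∑ i, ∑ j, (if i = j then p else q) * (δ i * δ j)
      = (p - q) * ∑ i, δ i ^ 2 + q * (∑ i, δ i) ^ 2 := by
  have hpq : ∀ i j : ι, (if i = j then p else q) = (if i = j then p - q else 0) + q := by
    intro i j; split_ifs <;> ring
  simp_rw [hpq, add_mul, sum_add_distrib, ite_mul, zero_mul, sum_ite_eq, mem_univ, if_true,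
    sq, sum_mul_sum, mul_sum]

theorem IsPermInvariant.sum_sum_filter_eq [Fintype ι] [DecidableEq ι] [DecidableEq α]
    (hS : IsPermInvariant S) (a : α) (i₀ : ι) (δ : ι → ℝ) :
    ∑ f ∈ S, ∑ i with f i = a, δ i = #{f ∈ S | f i₀ = a} * ∑ i, δ i := by
  simp_rw [sum_sum_filter_eq_sum_card_mul, hS.card_filter_apply_eq a _ i₀, mul_sum]

theorem IsPermInvariant.sum_sum_filter_eq_zero [Fintype ι] [DecidableEq ι]
    [DecidableEq α] (hS : IsPermInvariant S) (a : α) {δ : ι → ℝ} (hδ : ∑ i, δ i = 0) :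
    ∑ f ∈ S, ∑ i with f i = a, δ i = 0 := by
  cases isEmpty_or_nonempty ι with
  | inl _ => simp
  | inr h => rw [hS.sum_sum_filter_eq a h.some, hδ, mul_zero]

theorem IsPermInvariant.sum_sq_sum_filter_eq [Fintype ι] [DecidableEq ι] [DecidableEq α]
    (hS : IsPermInvariant S) (a : α) {i₀ i₁ : ι} (h : i₀ ≠ i₁) (δ : ι → ℝ) :
    ∑ f ∈ S, (∑ i with f i = a, δ i) ^ 2
      = (#{f ∈ S | f i₀ = a} - #{f ∈ S | f i₀ = a ∧ f i₁ = a} : ℝ) * ∑ i, δ i ^ 2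
        + #{f ∈ S | f i₀ = a ∧ f i₁ = a} * (∑ i, δ i) ^ 2 := by
  rw [← sum_sum_ite_mul_mul_eq, sum_sq_sum_filter_eq_sum_sum_card_mul]
  refine sum_congr rfl fun i _ ↦ sum_congr rfl fun j _ ↦ ?_
  split_ifs with hij
  · subst hij
    simpa using congrArg (fun n : ℕ ↦ (n : ℝ) * (δ i * δ i)) (hS.card_filter_apply_eq a i i₀)
  · rw [hS.card_filter_apply_eq_and_apply_eq a hij h]

/- Double counting: the moment identities for `δ ≡ 1`, whose fiber sums are all equal to `m`. -/
theorem IsPermInvariant.card_filter_apply_mul_card [Fintype ι] [DecidableEq ι] [DecidableEq α]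
    (hS : IsPermInvariant S) {a : α} {m : ℕ} (hm : ∀ f ∈ S, #{i | f i = a} = m) (i₀ : ι) :
    (#{f ∈ S | f i₀ = a} : ℝ) * Fintype.card ι = #S * m := by
  have h := hS.sum_sum_filter_eq a i₀ (fun _ ↦ 1)
  simp only [sum_const, nsmul_one, card_univ] at h
  rw [sum_congr rfl fun f hf ↦ by rw [hm f hf]] at h
  simpa [mul_comm] using h.symm

theorem IsPermInvariant.card_filter_apply_and_apply_mul_card [Fintype ι] [DecidableEq ι]
    [DecidableEq α] (hS : IsPermInvariant S) {a : α} {m : ℕ}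
    (hm : ∀ f ∈ S, #{i | f i = a} = m) {i₀ i₁ : ι} (h : i₀ ≠ i₁) :
    (#{f ∈ S | f i₀ = a} - #{f ∈ S | f i₀ = a ∧ f i₁ = a} : ℝ) * Fintype.card ι
      + #{f ∈ S | f i₀ = a ∧ f i₁ = a} * (Fintype.card ι : ℝ) ^ 2 = #S * m ^ 2 := by
  have h := hS.sum_sq_sum_filter_eq a h (fun _ ↦ 1)
  simp only [sum_const, nsmul_one, one_pow, card_univ] at h
  rw [sum_congr rfl fun f hf ↦ by rw [hm f hf]] at h
  simpa using h.symm

end PermInvariant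

theorem mem_balancedColorings {k L : ℕ} {f : Fin k → Fin L} :
    f ∈ balancedColorings k L ↔ ∀ r : Fin L, #{i | f i = r} = k / L := by
  simp [balancedColorings]

theorem isPermInvariant_balancedColorings (k L : ℕ) :
    IsPermInvariant (balancedColorings k L) := by
  intro σ f hf
  rw [mem_balancedColorings] at hf ⊢
  intro r
  rw [← hf r]
  exact card_equiv σ (by simp)

theorem balancedColorings_nonempty {k L : ℕ} (hL : 0 < L) (hdvd : L ∣ k) :
    (balancedColorings k L).Nonempty := by
  obtain ⟨m, rfl⟩ := hdvd
  let e : Fin (L * m) ≃ Fin L × Fin m := finProdFinEquiv.symm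
  refine ⟨fun i ↦ (e i).1, mem_balancedColorings.mpr fun r ↦ ?_⟩
  rw [Nat.mul_div_cancel_left m hL, card_filter, ← e.symm.sum_comp, Fintype.sum_prod_type]
  simp

theorem sum_partSum_sq_balancedColorings {k L : ℕ} (hL : 2 ≤ L) (hLk : L ≤ k) (hdvd : L ∣ k)
    (δ : Fin k → ℝ) (hδ : ∑ i, δ i = 0) (r : Fin L) :
    ∑ f ∈ balancedColorings k L, partSum δ f r ^ 2
      = #(balancedColorings k L) * (1 / L * (1 - 1 / L + (L - 1) / (L * (k - 1))))
        * ∑ i, δ i ^ 2 := by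
  obtain ⟨m, hkm⟩ := hdvd
  have hk : 1 < k := by omega
  have hm : m ≠ 0 := by rintro rfl; omega
  set B := balancedColorings k L
  have hB : IsPermInvariant B := isPermInvariant_balancedColorings k L
  have hfiber : ∀ f ∈ B, #{i | f i = r} = m := fun f hf ↦ by
    rw [mem_balancedColorings.mp hf r, hkm, Nat.mul_div_cancel_left m (by omega)]
  have : Nontrivial (Fin k) := Fin.nontrivial_iff_two_le.mpr hk
  obtain ⟨i₀, i₁, h01⟩ := exists_pair_ne (Fin k)
  set p : ℝ := ((#{f ∈ B | f i₀ = r} : ℕ) : ℝ)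
  set q : ℝ := ((#{f ∈ B | f i₀ = r ∧ f i₁ = r} : ℕ) : ℝ)
  have hp := hB.card_filter_apply_mul_card hfiber i₀
  have hq := hB.card_filter_apply_and_apply_mul_card hfiber h01
  rw [Fintype.card_fin] at hp hq
  have hkR : (k : ℝ) = L * m := by exact_mod_cast hkm
  have hm0 : (m : ℝ) ≠ 0 := by exact_mod_cast hm
  have hk1 : (k : ℝ) - 1 ≠ 0 := by
    rw [sub_ne_zero]; exact_mod_cast hk.ne'
  have hpL : p * L = #B := by
    apply mul_right_cancel₀ hm0; linear_combination hp - p * hkR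
  have hqL : q * L * (k - 1) = #B * (m - 1) := by
    apply mul_right_cancel₀ hm0; linear_combination hq - hp - q * (k - 1) * hkR
  have hpq : p - q = #B * (1 / L * (1 - 1 / L + (L - 1) / (L * (k - 1)))) := by
    field_simp
    linear_combination (L * (k - 1)) * hpL - L * hqL + #B * hkR
  simp only [partSum]
  rw [hB.sum_sq_sum_filter_eq r h01, hδ, ← hpq]
  ring

theorem one_div_two_mul_le_flattening_coeff {k L : ℝ} (hL : 2 ≤ L) (hk : 1 ≤ k) :
    1 / (2 * L) ≤ 1 / L * (1 - 1 / L + (L - 1) / (L * (k - 1))) := by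
  have hfrac : 0 ≤ (L - 1) / (L * (k - 1)) := by
    apply div_nonneg <;> nlinarith
  calc 1 / (2 * L) = 1 / L * (1 - 1 / 2) := by field_simp; ring
    _ ≤ 1 / L * (1 - 1 / L + (L - 1) / (L * (k - 1))) := by
      gcongr
      linarith [one_div_le_one_div_of_le two_pos hL]

/-- Moments of `Z_r = ∑_{i : f i = r} δ_i` for a uniformly random balanced `L`-coloring `f`:
`E[Z_r] = 0`, `E[Z_r²] = (1/L)·‖δ‖₂²·(1 − 1/L + (L−1)/(L(k−1))) ≥ ‖δ‖₂²/(2L)`, and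
consequently `E[‖Z‖₂²] ≥ ‖δ‖₂²/2`. -/
theorem random_flattening_moments (k L : ℕ) (hL2 : 2 ≤ L) (hLk : L ≤ k) (hdvd : L ∣ k)
    (δ : Fin k → ℝ) (hδsum : ∑ i, δ i = 0) :
    (∀ r : Fin L,
      (∑ f ∈ balancedColorings k L, partSum δ f r) / ((balancedColorings k L).card : ℝ) = 0 ∧
      (∑ f ∈ balancedColorings k L, partSum δ f r ^ 2) / ((balancedColorings k L).card : ℝ)
        = (1 / L) * (∑ i, δ i ^ 2) * (1 - 1 / L + (L - 1) / (L * (k - 1))) ∧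
      (∑ i, δ i ^ 2) / (2 * L)
        ≤ (∑ f ∈ balancedColorings k L, partSum δ f r ^ 2)
            / ((balancedColorings k L).card : ℝ))
    ∧ (∑ i, δ i ^ 2) / 2
        ≤ (∑ f ∈ balancedColorings k L, ∑ r, partSum δ f r ^ 2)
            / ((balancedColorings k L).card : ℝ) := by
  set B := balancedColorings k L
  have hN : (#B : ℝ) ≠ 0 := by
    exact_mod_cast (balancedColorings_nonempty (by omega) hdvd).card_pos.ne'
  have hmean (r : Fin L) : ∑ f ∈ B, partSum δ f r = 0 :=
    (isPermInvariant_balancedColorings k L).sum_sum_filter_eq_zero r hδsum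
  have hvar (r : Fin L) : (∑ f ∈ B, partSum δ f r ^ 2) / #B
      = (1 / L) * (∑ i, δ i ^ 2) * (1 - 1 / L + (L - 1) / (L * (k - 1))) := by
    rw [sum_partSum_sq_balancedColorings hL2 hLk hdvd δ hδsum r, mul_assoc,
      mul_div_cancel_left₀ _ hN]
    ring
  have hlower (r : Fin L) : (∑ i, δ i ^ 2) / (2 * L) ≤ (∑ f ∈ B, partSum δ f r ^ 2) / #B := by
    rw [hvar r, div_eq_mul_one_div, mul_comm (1 / (L : ℝ)), mul_assoc]
    gcongr
    exact one_div_two_mul_le_flattening_coeff (by exact_mod_cast hL2)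
      (by exact_mod_cast (by omega : 1 ≤ k))
  refine ⟨fun r ↦ ⟨by rw [hmean r, zero_div], hvar r, hlower r⟩, ?_⟩
  calc (∑ i, δ i ^ 2) / 2 = ∑ _r : Fin L, (∑ i, δ i ^ 2) / (2 * L) := by
        rw [sum_const, card_univ, Fintype.card_fin, nsmul_eq_mul]
        field_simp
    _ ≤ ∑ r, (∑ f ∈ B, partSum δ f r ^ 2) / #B := sum_le_sum fun r _ ↦ hlower r
    _ = (∑ f ∈ B, ∑ r, partSum δ f r ^ 2) / #B := by rw [← sum_div, sum_comm]
end

section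
/- There exists an absolute constant C > 0 such that the following holds. Let k, L be integers with 2 ≤ L < k and L dividing k, and let δ : Fin k → ℝ satisfy ∑_{i=1}^k δ_i = 0. Let f be a uniformly random balanced L-coloring of [k] and set Z_r = ∑_{i : f(i)=r} δ_i for r ∈ [L]. Then E[‖Z‖₂⁴] ≤ C·‖δ‖₂⁴. -/
open scoped BigOperators Classical

open Finset Function

/-!
Expanding the square, `∑_f ‖Z‖₂⁴ = ∑_{i,j,p,q} δᵢ δⱼ δₚ δ_q N(i,j,p,q)` with
`N(i,j,p,q) = #{f | f i = f j ∧ f p = f q}`. Balanced colorings are permuted among themselves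
by relabelling `[k]`, so `N` depends only on which of `i, j, p, q` coincide and takes just the
values `n = #S`, `n₂`, `n₃`, `n₄` (one equality, three equal indices, two disjoint equal pairs).
Written as a polynomial in the indicators `[x = y]`, every monomial leaving some index free is
killed by `∑ δ = 0`; what survives is
`(n - 4n₃ + 3n₄)‖δ‖₂⁴ + (8n₃ - 2n₂ - 6n₄)‖δ‖₄⁴ ≤ 8n‖δ‖₂⁴`, using `0 ≤ nᵢ ≤ n` and `‖δ‖₄⁴ ≤ ‖δ‖₂⁴`.
-/

section CoincidencePatterns

variable {α β ι : Type*} {S : Finset (α → β)}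

theorem card_filter_comp_perm (hS : ∀ σ : Equiv.Perm α, ∀ f ∈ S, f ∘ σ ∈ S)
    (σ : Equiv.Perm α) (P : (α → β) → Prop) [DecidablePred P] :
    #{f ∈ S | P (f ∘ σ)} = #{f ∈ S | P f} := by
  refine card_nbij' (· ∘ σ) (· ∘ σ.symm) (fun f hf => ?_) (fun f hf => ?_)
    (fun f _ => by simp [comp_assoc]) (fun f _ => by simp [comp_assoc])
  · simp only [coe_filter, Set.mem_ofPred_eq] at hf ⊢
    exact ⟨hS σ f hf.1, hf.2⟩
  · simp only [coe_filter, Set.mem_ofPred_eq] at hf ⊢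
    exact ⟨hS σ.symm f hf.1, by simpa [comp_assoc] using hf.2⟩

theorem card_filter_comp_eq_of_injective (hS : ∀ σ : Equiv.Perm α, ∀ f ∈ S, f ∘ σ ∈ S)
    [Finite ι] {u v : ι → α} (hu : Injective u) (hv : Injective v) (P : (ι → β) → Prop)
    [DecidablePred P] :
    #{f ∈ S | P (f ∘ u)} = #{f ∈ S | P (f ∘ v)} := by
  obtain ⟨σ, hσ⟩ := Equiv.Perm.exists_extending_pair u v hu hv
  have hv' (f : α → β) : f ∘ v = (f ∘ σ) ∘ u := funext fun a => by simp [hσ]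
  simp_rw [hv']
  exact (card_filter_comp_perm hS σ fun g => P (g ∘ u)).symm

variable [DecidableEq α]

def patternCount (n n₂ n₃ n₄ : ℝ) (i j p q : α) : ℝ :=
  if i = j then (if p = q then n else n₂)
  else if p = q then n₂
  else if (i = p ∧ j = q) ∨ (i = q ∧ j = p) then n₂
  else if i = p ∨ i = q ∨ j = p ∨ j = q then n₃
  else n₄

theorem patternCount_eq_poly (n n₂ n₃ n₄ : ℝ) (i j p q : α) :
    patternCount n n₂ n₃ n₄ i j p q =
      n₄ + (n₃ - n₄) * (((if i = p then 1 else 0) + (if i = q then 1 else 0) +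
          (if j = p then 1 else 0) + (if j = q then 1 else 0)) *
          (1 - (if i = j then 1 else 0) - (if p = q then 1 else 0)))
        + (n₂ - n₄) * ((if i = j then 1 else 0) + (if p = q then 1 else 0))
        + (n₂ + n₄ - 2 * n₃) * ((if i = p then 1 else 0) * (if j = q then 1 else 0) +
          (if i = q then 1 else 0) * (if j = p then 1 else 0))
        + (n - 2 * n₂ + n₄) * ((if i = j then 1 else 0) * (if p = q then 1 else 0))
        + (8 * n₃ - 2 * n₂ - 6 * n₄) *
          ((if i = j then 1 else 0) * (if p = q then 1 else 0) * (if i = p then 1 else 0)) := by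
  unfold patternCount
  split_ifs <;> simp_all <;> ring

variable [DecidableEq β]

theorem card_filter_eq_patternCount (hS : ∀ σ : Equiv.Perm α, ∀ f ∈ S, f ∘ σ ∈ S)
    {a b c d : α} (habcd : [a, b, c, d].Nodup) (i j p q : α) :
    (#{f ∈ S | f i = f j ∧ f p = f q} : ℝ) =
      patternCount #S #{f ∈ S | f a = f b} #{f ∈ S | f a = f b ∧ f a = f c}
        #{f ∈ S | f a = f b ∧ f c = f d} i j p q := by
  have relabel {t : ℕ} {u v : Fin t → α} (hu : (List.ofFn u).Nodup) (hv : (List.ofFn v).Nodup)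
      (P : (Fin t → β) → Prop) [DecidablePred P] : #{f ∈ S | P (f ∘ u)} = #{f ∈ S | P (f ∘ v)} :=
    card_filter_comp_eq_of_injective hS (List.nodup_ofFn.mp hu) (List.nodup_ofFn.mp hv) P
  have pair {x y : α} (h : [x, y].Nodup) : #{f ∈ S | f x = f y} = #{f ∈ S | f a = f b} :=
    relabel (u := ![x, y]) (v := ![a, b]) (by simpa using h)
      (by simpa using habcd.sublist (List.sublist_append_left [a, b] [c, d])) fun g => g 0 = g 1
  have triple {x y z : α} (h : [x, y, z].Nodup) :
      #{f ∈ S | f x = f y ∧ f x = f z} = #{f ∈ S | f a = f b ∧ f a = f c} :=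
    relabel (u := ![x, y, z]) (v := ![a, b, c]) (by simpa using h)
      (by simpa using habcd.sublist (List.sublist_append_left [a, b, c] [d]))
      fun g => g 0 = g 1 ∧ g 0 = g 2
  have quad {x y z w : α} (h : [x, y, z, w].Nodup) :
      #{f ∈ S | f x = f y ∧ f z = f w} = #{f ∈ S | f a = f b ∧ f c = f d} :=
    relabel (u := ![x, y, z, w]) (v := ![a, b, c, d]) (by simpa using h) (by simpa using habcd)
      fun g => g 0 = g 1 ∧ g 2 = g 3
  unfold patternCount
  split_ifs with hij hpq hpq hsame hmeet
  · simp [hij, hpq]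
  · simp [hij, pair (by simpa)]
  · simp [hpq, pair (by simpa)]
  · rcases hsame with ⟨rfl, rfl⟩ | ⟨rfl, rfl⟩
    · simp [pair (by simpa)]
    · rw [filter_congr fun f _ => and_iff_left_of_imp Eq.symm]
      exact_mod_cast pair (by simpa)
  · rcases hmeet with rfl | rfl | rfl | rfl
    · exact_mod_cast triple (by simp; grind)
    · rw [filter_congr fun f _ => and_congr_right' eq_comm]
      exact_mod_cast triple (by simp; grind)
    · rw [filter_congr fun f _ => and_congr_left' eq_comm]
      exact_mod_cast triple (by simp; grind)
    · rw [filter_congr fun f _ => and_congr eq_comm eq_comm]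
      exact_mod_cast triple (by simp; grind)
  · exact_mod_cast quad (by simp; grind)

variable [Fintype α]

theorem sum_mul_patternCount {δ : α → ℝ} (hδ : ∑ i, δ i = 0) (n n₂ n₃ n₄ : ℝ) :
    ∑ i, δ i * ∑ j, δ j * ∑ p, δ p * ∑ q, δ q * patternCount n n₂ n₃ n₄ i j p q =
      (n - 4 * n₃ + 3 * n₄) * (∑ i, δ i ^ 2) ^ 2 + (8 * n₃ - 2 * n₂ - 6 * n₄) * ∑ i, δ i ^ 4 := by
  simp only [patternCount_eq_poly, mul_add, mul_sub, add_mul, sub_mul, mul_ite, mul_one, mul_zero,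
    zero_mul, sum_add_distrib, sum_sub_distrib, sum_ite_eq, mem_univ, if_true, sum_ite_irrel,
    sum_const_zero, ← sum_mul, hδ]
  simp only [mul_sum]
  ring_nf
  simp only [← sum_mul, ← mul_sum]
  ring

theorem sum_mul_card_filter_eq (hS : ∀ σ : Equiv.Perm α, ∀ f ∈ S, f ∘ σ ∈ S)
    {a b c d : α} (habcd : [a, b, c, d].Nodup) {δ : α → ℝ} (hδ : ∑ i, δ i = 0) :
    ∑ i, δ i * ∑ j, δ j * ∑ p, δ p * ∑ q, δ q * (#{f ∈ S | f i = f j ∧ f p = f q} : ℝ) =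
      (#S - 4 * #{f ∈ S | f a = f b ∧ f a = f c} + 3 * #{f ∈ S | f a = f b ∧ f c = f d}) *
          (∑ i, δ i ^ 2) ^ 2 +
        (8 * #{f ∈ S | f a = f b ∧ f a = f c} - 2 * #{f ∈ S | f a = f b} -
          6 * #{f ∈ S | f a = f b ∧ f c = f d}) * ∑ i, δ i ^ 4 := by
  rw [← sum_mul_patternCount hδ]
  congr! 8 with i _ j _ p _ q
  exact card_filter_eq_patternCount hS habcd i j p q

theorem sum_mul_card_filter_le (hS : ∀ σ : Equiv.Perm α, ∀ f ∈ S, f ∘ σ ∈ S)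
    {a b c d : α} (habcd : [a, b, c, d].Nodup) {δ : α → ℝ} (hδ : ∑ i, δ i = 0) :
    ∑ i, δ i * ∑ j, δ j * ∑ p, δ p * ∑ q, δ q * (#{f ∈ S | f i = f j ∧ f p = f q} : ℝ) ≤
      8 * (∑ i, δ i ^ 2) ^ 2 * #S := by
  rw [sum_mul_card_filter_eq hS habcd hδ]
  have hS₄ : ∑ i, δ i ^ 4 ≤ (∑ i, δ i ^ 2) ^ 2 := by
    simpa only [← pow_mul] using sum_sq_le_sq_sum_of_nonneg fun i _ => sq_nonneg (δ i)
  have hS₄' : 0 ≤ ∑ i, δ i ^ 4 := sum_nonneg fun i _ => by positivity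
  have hn₂ : (0 : ℝ) ≤ #{f ∈ S | f a = f b} := Nat.cast_nonneg _
  have hn₃ : (#{f ∈ S | f a = f b ∧ f a = f c} : ℝ) ≤ #S := mod_cast card_filter_le _ _
  have hn₄ : (#{f ∈ S | f a = f b ∧ f c = f d} : ℝ) ≤ #S := mod_cast card_filter_le _ _
  have hn₃' : (0 : ℝ) ≤ #{f ∈ S | f a = f b ∧ f a = f c} := Nat.cast_nonneg _
  have hn₄' : (0 : ℝ) ≤ #{f ∈ S | f a = f b ∧ f c = f d} := Nat.cast_nonneg _
  nlinarith [mul_le_mul_of_nonneg_left hS₄ hn₃', mul_nonneg hn₂ hS₄', mul_nonneg hn₄' hS₄',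
    mul_le_mul_of_nonneg_right hn₃ (sq_nonneg (∑ i, δ i ^ 2)),
    mul_le_mul_of_nonneg_right hn₄ (sq_nonneg (∑ i, δ i ^ 2))]

end CoincidencePatterns

theorem comp_perm_mem_balancedColorings {k L : ℕ} (σ : Equiv.Perm (Fin k)) :
    ∀ f ∈ balancedColorings k L, f ∘ σ ∈ balancedColorings k L := by
  intro f hf
  simp only [balancedColorings, mem_filter, mem_univ, true_and] at hf ⊢
  intro r
  rw [← hf r]
  exact card_equiv σ fun i => by simp

theorem sum_partSum_sq {k L : ℕ} (δ : Fin k → ℝ) (f : Fin k → Fin L) :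
    ∑ r, partSum δ f r ^ 2 = ∑ i, δ i * ∑ j, δ j * if f i = f j then 1 else 0 := by
  calc ∑ r, partSum δ f r ^ 2 = ∑ r, ∑ i with f i = r, δ i * partSum δ f (f i) := by
        refine sum_congr rfl fun r _ => ?_
        rw [sq]
        nth_rw 1 [partSum]
        rw [sum_mul]
        exact sum_congr rfl fun i hi => by rw [(mem_filter.mp hi).2]
    _ = ∑ i, δ i * partSum δ f (f i) := sum_fiberwise _ _ _
    _ = _ := by simp [partSum, sum_filter, eq_comm]

theorem sum_sq_sum_partSum_sq {k L : ℕ} (S : Finset (Fin k → Fin L)) (δ : Fin k → ℝ) :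
    ∑ f ∈ S, (∑ r, partSum δ f r ^ 2) ^ 2 =
      ∑ i, δ i * ∑ j, δ j * ∑ p, δ p * ∑ q, δ q * (#{f ∈ S | f i = f j ∧ f p = f q} : ℝ) := by
  have hsq (f : Fin k → Fin L) : (∑ r, partSum δ f r ^ 2) ^ 2 =
      ∑ i, δ i * ∑ j, δ j * ∑ p, δ p * ∑ q, δ q * if f i = f j ∧ f p = f q then 1 else 0 := by
    rw [sum_partSum_sq, sq]
    simp only [sum_mul, mul_sum]
    refine sum_congr rfl fun i _ => sum_congr rfl fun j _ => sum_congr rfl fun p _ =>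
      sum_congr rfl fun q _ => ?_
    rw [ite_and]
    split_ifs <;> ring
  simp only [hsq, natCast_card_filter, mul_sum]
  rw [sum_comm]
  refine sum_congr rfl fun i _ => ?_
  rw [sum_comm]
  refine sum_congr rfl fun j _ => ?_
  rw [sum_comm]
  refine sum_congr rfl fun p _ => ?_
  rw [sum_comm]

/-- There is an absolute constant `C > 0` such that for all `2 ≤ L < k` with `L ∣ k` and every
`δ : Fin k → ℝ` summing to `0`, a uniformly random balanced `L`-coloring `f` satisfies
`E[‖Z‖₂⁴] ≤ C·‖δ‖₂⁴`, where `Z_r = ∑_{i : f i = r} δ_i`. -/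
theorem random_flattening_fourth_moment :
    ∃ C : ℝ, 0 < C ∧
      ∀ (k L : ℕ), 2 ≤ L → L < k → L ∣ k →
        ∀ δ : Fin k → ℝ, (∑ i, δ i = 0) →
          (∑ f ∈ balancedColorings k L, (∑ r, partSum δ f r ^ 2) ^ 2)
              / ((balancedColorings k L).card : ℝ)
            ≤ C * (∑ i, δ i ^ 2) ^ 2 := by
  refine ⟨8, by norm_num, fun k L hL hLk ⟨m, hm⟩ δ hδ => ?_⟩
  have hm₂ : 1 < m := (Nat.lt_mul_iff_one_lt_right (by omega)).1 (hm ▸ hLk)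
  have hk : 4 ≤ k := by nlinarith
  have habcd : [(⟨0, by omega⟩ : Fin k), ⟨1, by omega⟩, ⟨2, by omega⟩, ⟨3, by omega⟩].Nodup := by
    simp [Fin.ext_iff]
  refine div_le_of_le_mul₀ (Nat.cast_nonneg _) (by positivity) ?_
  rw [sum_sq_sum_partSum_sq]
  exact sum_mul_card_filter_le comp_perm_mem_balancedColorings habcd hδ
end

section
/- There exists an absolute constant C' > 0 such that the following holds. Let k, L be integers with 2 ≤ L < k and L dividing k, and let δ : Fin k → ℝ satisfy ∑_{i=1}^k δ_i = 0. Let f be a uniformly random balanced L-coloring of [k] and set Z_r = ∑_{i : f(i)=r} δ_i for r ∈ [L]. Then ∑_{1 ≤ r < r' ≤ L} E[Z_r² Z_{r'}²] ≤ C'·‖δ‖₂⁴. -/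
open scoped BigOperators Classical

lemma exists_perm_pairs {α : Type*} [DecidableEq α] :
    ∀ (l : List (α × α)), (l.map Prod.fst).Nodup → (l.map Prod.snd).Nodup →
      ∃ σ : Equiv.Perm α, ∀ p ∈ l, σ p.1 = p.2
  | [], _, _ => ⟨1, by simp⟩
  | (a, a') :: l, h₁, h₂ => by
      simp only [List.map_cons, List.nodup_cons] at h₁ h₂
      obtain ⟨σ, hσ⟩ := exists_perm_pairs l h₁.2 h₂.2
      refine ⟨Equiv.swap (σ a) a' * σ, ?_⟩
      rintro p hp
      rcases List.mem_cons.1 hp with h | h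
      · subst h; simp [Equiv.swap_apply_left]
      · have h1 : σ p.1 = p.2 := hσ p h
        have hpa : p.1 ≠ a := by
          rintro rfl; exact h₁.1 (List.mem_map.2 ⟨p, h, rfl⟩)
        have hp2a' : p.2 ≠ a' := by
          rintro hh; exact h₂.1 (List.mem_map.2 ⟨p, h, hh⟩)
        have hp2sa : p.2 ≠ σ a := by
          rintro hh; exact hpa (σ.injective (h1.trans hh))
        simp only [Equiv.Perm.mul_apply, h1]
        exact Equiv.swap_apply_of_ne_of_ne hp2sa hp2a'


section

variable {k L : ℕ}

lemma comp_mem_balanced (σ : Equiv.Perm (Fin k)) {f : Fin k → Fin L}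
    (hf : f ∈ balancedColorings k L) : f ∘ σ ∈ balancedColorings k L := by
  simp only [balancedColorings, Finset.mem_filter, Finset.mem_univ, true_and] at hf ⊢
  intro r
  rw [← hf r]
  apply Finset.card_bij' (fun i _ => σ i) (fun i _ => σ.symm i)
  · intro i hi; simp only [Finset.mem_filter, Finset.mem_univ, true_and] at hi ⊢; exact hi
  · intro i hi; simp only [Finset.mem_filter, Finset.mem_univ, true_and] at hi ⊢
    simpa using hi
  · intro i _; simp
  · intro i _; simp

noncomputable def wN (k L : ℕ) (a b c d : Fin k) : ℕ :=
  ((balancedColorings k L).filter fun f => f a = f b ∧ f c = f d ∧ f a ≠ f c).card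

lemma wN_comp (σ : Equiv.Perm (Fin k)) (a b c d : Fin k) :
    wN k L (σ a) (σ b) (σ c) (σ d) = wN k L a b c d := by
  unfold wN
  apply Finset.card_bij' (fun f _ => f ∘ σ) (fun g _ => g ∘ σ.symm)
  · intro f hf
    simp only [Finset.mem_filter] at hf ⊢
    exact ⟨comp_mem_balanced σ hf.1, hf.2⟩
  · intro g hg
    simp only [Finset.mem_filter] at hg ⊢
    refine ⟨comp_mem_balanced σ.symm hg.1, ?_⟩
    simpa [Function.comp] using hg.2
  · intro f _; funext x; simp
  · intro g _; funext x; simp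
lemma claim_f (δ : Fin k → ℝ) (f : Fin k → Fin L) :
    ∑ r : Fin L, ∑ r' : Fin L,
        (if r ≠ r' then partSum δ f r ^ 2 * partSum δ f r' ^ 2 else 0)
      = ∑ i : Fin k, ∑ j : Fin k, ∑ i' : Fin k, ∑ j' : Fin k,
          (if f i = f j ∧ f i' = f j' ∧ f i ≠ f i' then δ i * δ j * (δ i' * δ j') else 0) := by
  set Z := partSum δ f with hZdef
  have hZ : ∀ r, Z r = ∑ j : Fin k, (if f j = r then δ j else 0) := by
    intro r; rw [hZdef]; exact Finset.sum_filter _ _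
  -- step 1 : collapse the two inner sums
  have step1 : ∀ i i' : Fin k,
      (∑ j : Fin k, ∑ j' : Fin k,
        (if f i = f j ∧ f i' = f j' ∧ f i ≠ f i' then δ i * δ j * (δ i' * δ j') else 0))
      = (if f i ≠ f i' then (δ i * Z (f i)) * (δ i' * Z (f i')) else 0) := by
    intro i i'
    by_cases hne : f i = f i'
    · simp [hne]
    · rw [if_pos hne]
      have hterm : ∀ j j' : Fin k,
          (if f i = f j ∧ f i' = f j' ∧ f i ≠ f i' then δ i * δ j * (δ i' * δ j') else 0)
          = (if f j = f i then δ i * δ j else 0) * (if f j' = f i' then δ i' * δ j' else 0) := by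
        intro j j'
        by_cases h1 : f j = f i
        · by_cases h2 : f j' = f i'
          · rw [if_pos h1, if_pos h2, if_pos ⟨h1.symm, h2.symm, hne⟩]
          · rw [if_neg h2, mul_zero, if_neg]; rintro ⟨-, hh, -⟩; exact h2 hh.symm
        · rw [if_neg h1, zero_mul, if_neg]; rintro ⟨hh, -, -⟩; exact h1 hh.symm
      calc ∑ j : Fin k, ∑ j' : Fin k,
            (if f i = f j ∧ f i' = f j' ∧ f i ≠ f i' then δ i * δ j * (δ i' * δ j') else 0)
          = ∑ j : Fin k, ∑ j' : Fin k,
            (if f j = f i then δ i * δ j else 0) * (if f j' = f i' then δ i' * δ j' else 0) := by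
            exact Finset.sum_congr rfl fun j _ => Finset.sum_congr rfl fun j' _ => hterm j j'
        _ = (∑ j : Fin k, (if f j = f i then δ i * δ j else 0))
              * (∑ j' : Fin k, (if f j' = f i' then δ i' * δ j' else 0)) := by
            rw [Finset.sum_mul_sum]
        _ = (δ i * Z (f i)) * (δ i' * Z (f i')) := by
            have efac : ∀ (c : ℝ) (r : Fin L),
                (∑ j : Fin k, (if f j = r then c * δ j else 0)) = c * Z r := by
              intro c r; rw [hZ, Finset.mul_sum]
              exact Finset.sum_congr rfl fun j _ => by by_cases hc : f j = r <;> simp [hc]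
            rw [efac (δ i) (f i), efac (δ i') (f i')]
  -- after step1 the RHS is a double sum; regroup it by fibers
  have step2 : ∀ (r r' : Fin L),
      (if r ≠ r' then Z r ^ 2 * Z r' ^ 2 else 0)
      = ∑ i ∈ Finset.univ.filter (fun i => f i = r),
          ∑ i' ∈ Finset.univ.filter (fun i' => f i' = r'),
            (if f i ≠ f i' then (δ i * Z (f i)) * (δ i' * Z (f i')) else 0) := by
    intro r r'
    have hcg : ∀ i ∈ Finset.univ.filter (fun i => f i = r),
        ∀ i' ∈ Finset.univ.filter (fun i' => f i' = r'),
        (if f i ≠ f i' then (δ i * Z (f i)) * (δ i' * Z (f i')) else 0)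
        = (if r ≠ r' then (δ i * Z r) * (δ i' * Z r') else 0) := by
      intro i hi i' hi'
      simp only [Finset.mem_filter] at hi hi'
      rw [hi.2, hi'.2]
    rw [Finset.sum_congr rfl fun i hi => Finset.sum_congr rfl fun i' hi' => hcg i hi i' hi']
    by_cases h : r = r'
    · simp [h]
    · rw [if_pos h, Finset.sum_congr rfl fun i _ => Finset.sum_congr rfl
        (fun i' _ => if_pos h :
          ∀ i' ∈ Finset.univ.filter (fun i' => f i' = r'),
            (if r ≠ r' then (δ i * Z r) * (δ i' * Z r') else 0) = (δ i * Z r) * (δ i' * Z r'))]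
      rw [← Finset.sum_mul_sum]
      have e1 : ∑ i ∈ Finset.univ.filter (fun i => f i = r), δ i * Z r = Z r * Z r := by
        rw [← Finset.sum_mul]; rw [hZdef]; unfold partSum; ring
      have e2 : ∑ i' ∈ Finset.univ.filter (fun i' => f i' = r'), δ i' * Z r' = Z r' * Z r' := by
        rw [← Finset.sum_mul]; rw [hZdef]; unfold partSum; ring
      rw [e1, e2]; ring
  calc ∑ r : Fin L, ∑ r' : Fin L, (if r ≠ r' then Z r ^ 2 * Z r' ^ 2 else 0)
      = ∑ r : Fin L, ∑ r' : Fin L,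
          ∑ i ∈ Finset.univ.filter (fun i => f i = r),
          ∑ i' ∈ Finset.univ.filter (fun i' => f i' = r'),
            (if f i ≠ f i' then (δ i * Z (f i)) * (δ i' * Z (f i')) else 0) := by
        exact Finset.sum_congr rfl fun r _ => Finset.sum_congr rfl fun r' _ => step2 r r'
    _ = ∑ r : Fin L, ∑ i ∈ Finset.univ.filter (fun i => f i = r), ∑ r' : Fin L,
          ∑ i' ∈ Finset.univ.filter (fun i' => f i' = r'),
            (if f i ≠ f i' then (δ i * Z (f i)) * (δ i' * Z (f i')) else 0) := by
        exact Finset.sum_congr rfl fun r _ => Finset.sum_comm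
    _ = ∑ r : Fin L, ∑ i ∈ Finset.univ.filter (fun i => f i = r), ∑ i' : Fin k,
            (if f i ≠ f i' then (δ i * Z (f i)) * (δ i' * Z (f i')) else 0) := by
        exact Finset.sum_congr rfl fun r _ => Finset.sum_congr rfl fun i _ =>
          Finset.sum_fiberwise _ f _
    _ = ∑ i : Fin k, ∑ i' : Fin k,
            (if f i ≠ f i' then (δ i * Z (f i)) * (δ i' * Z (f i')) else 0) := by
        exact Finset.sum_fiberwise _ f _
    _ = ∑ i : Fin k, ∑ i' : Fin k, ∑ j : Fin k, ∑ j' : Fin k,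
          (if f i = f j ∧ f i' = f j' ∧ f i ≠ f i' then δ i * δ j * (δ i' * δ j') else 0) := by
        exact (Finset.sum_congr rfl fun i _ => Finset.sum_congr rfl fun i' _ =>
          (step1 i i')).symm
    _ = _ := Finset.sum_congr rfl fun i _ => Finset.sum_comm
lemma sum_over_colorings (δ : Fin k → ℝ) :
    (∑ f ∈ balancedColorings k L, ∑ i : Fin k, ∑ j : Fin k, ∑ i' : Fin k, ∑ j' : Fin k,
        (if f i = f j ∧ f i' = f j' ∧ f i ≠ f i' then δ i * δ j * (δ i' * δ j') else 0))
    = ∑ i : Fin k, ∑ j : Fin k, ∑ i' : Fin k, ∑ j' : Fin k,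
        (wN k L i j i' j' : ℝ) * (δ i * δ j * (δ i' * δ j')) := by
  rw [Finset.sum_comm]
  refine Finset.sum_congr rfl fun i _ => ?_
  rw [Finset.sum_comm]
  refine Finset.sum_congr rfl fun j _ => ?_
  rw [Finset.sum_comm]
  refine Finset.sum_congr rfl fun i' _ => ?_
  rw [Finset.sum_comm]
  refine Finset.sum_congr rfl fun j' _ => ?_
  rw [← Finset.sum_filter, Finset.sum_const, nsmul_eq_mul]
  rfl
lemma wN_le (a b c d : Fin k) :
    ((wN k L a b c d : ℝ)) ≤ ((balancedColorings k L).card : ℝ) :=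
  Nat.cast_le.mpr (Finset.card_le_card (Finset.filter_subset _ _))

lemma wN_zero (a b c d : Fin k)
    (h : ∀ f : Fin k → Fin L, ¬(f a = f b ∧ f c = f d ∧ f a ≠ f c)) :
    wN k L a b c d = 0 := by
  unfold wN
  rw [Finset.filter_false_of_mem fun f _ => h f, Finset.card_empty]

lemma T_bound (hk4 : 4 ≤ k) (δ : Fin k → ℝ) (hsum : ∑ i, δ i = 0) :
    ∑ i : Fin k, ∑ j : Fin k, ∑ i' : Fin k, ∑ j' : Fin k,
        (wN k L i j i' j' : ℝ) * (δ i * δ j * (δ i' * δ j'))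
      ≤ 8 * ((balancedColorings k L).card : ℝ) * (∑ i, δ i * δ i) ^ 2 := by
  classical
  set N : ℝ := ((balancedColorings k L).card : ℝ) with hN
  have hN0 : 0 ≤ N := Nat.cast_nonneg _
  set p2 : ℝ := ∑ i, δ i * δ i with hp2
  set p3 : ℝ := ∑ i, δ i * δ i * δ i with hp3
  set p4 : ℝ := ∑ i, δ i * δ i * (δ i * δ i) with hp4
  have hp2nn : 0 ≤ p2 := Finset.sum_nonneg fun i _ => mul_self_nonneg _
  have hp4nn : 0 ≤ p4 := Finset.sum_nonneg fun i _ =>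
    mul_nonneg (mul_self_nonneg _) (mul_self_nonneg _)
  have hp42 : p4 ≤ p2 * p2 := by
    rw [hp4, hp2, Finset.sum_mul]
    refine Finset.sum_le_sum fun i _ => ?_
    exact mul_le_mul_of_nonneg_left
      (Finset.single_le_sum (fun j _ => mul_self_nonneg (δ j)) (Finset.mem_univ i))
      (mul_self_nonneg _)
  -- canonical points
  have h0 : (0:ℕ) < k := by omega
  have h1 : (1:ℕ) < k := by omega
  have h2 : (2:ℕ) < k := by omega
  have h3 : (3:ℕ) < k := by omega
  set t0 : Fin k := ⟨0, h0⟩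
  set t1 : Fin k := ⟨1, h1⟩
  set t2 : Fin k := ⟨2, h2⟩
  set t3 : Fin k := ⟨3, h3⟩
  have ht : t0 ≠ t1 ∧ t0 ≠ t2 ∧ t0 ≠ t3 ∧ t1 ≠ t2 ∧ t1 ≠ t3 ∧ t2 ≠ t3 := by
    refine ⟨?_, ?_, ?_, ?_, ?_, ?_⟩ <;> · simp [t0, t1, t2, t3, Fin.ext_iff]
  set qB : ℝ := (wN k L t0 t0 t1 t2 : ℝ) with hqB
  set qC : ℝ := (wN k L t0 t1 t2 t2 : ℝ) with hqC
  set q4 : ℝ := (wN k L t0 t1 t2 t3 : ℝ) with hq4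
  have hqBnn : 0 ≤ qB := Nat.cast_nonneg _
  have hqCnn : 0 ≤ qC := Nat.cast_nonneg _
  have hq4nn : 0 ≤ q4 := Nat.cast_nonneg _
  have hqBle : qB ≤ N := wN_le _ _ _ _
  have hqCle : qC ≤ N := wN_le _ _ _ _
  have hq4le : q4 ≤ N := wN_le _ _ _ _
  -- constancy lemmas
  have hconstB : ∀ a b c : Fin k, a ≠ b → a ≠ c → b ≠ c → (wN k L a a b c : ℝ) = qB := by
    intro a b c hab hac hbc
    obtain ⟨σ, hσ⟩ := exists_perm_pairs [(t0, a), (t1, b), (t2, c)]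
      (by simp [ht.1, ht.2.1, ht.2.2.2.1]) (by simp [hab, hac, hbc])
    have e0 : σ t0 = a := hσ (t0, a) (by simp)
    have e1 : σ t1 = b := hσ (t1, b) (by simp)
    have e2 : σ t2 = c := hσ (t2, c) (by simp)
    rw [hqB, ← e0, ← e1, ← e2, wN_comp]
  have hconstC : ∀ a b c : Fin k, a ≠ b → a ≠ c → b ≠ c → (wN k L a b c c : ℝ) = qC := by
    intro a b c hab hac hbc
    obtain ⟨σ, hσ⟩ := exists_perm_pairs [(t0, a), (t1, b), (t2, c)]
      (by simp [ht.1, ht.2.1, ht.2.2.2.1]) (by simp [hab, hac, hbc])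
    have e0 : σ t0 = a := hσ (t0, a) (by simp)
    have e1 : σ t1 = b := hσ (t1, b) (by simp)
    have e2 : σ t2 = c := hσ (t2, c) (by simp)
    rw [hqC, ← e0, ← e1, ← e2, wN_comp]
  have hconst4 : ∀ a b c d : Fin k, a ≠ b → a ≠ c → a ≠ d → b ≠ c → b ≠ d → c ≠ d →
      (wN k L a b c d : ℝ) = q4 := by
    intro a b c d hab hac had hbc hbd hcd
    obtain ⟨σ, hσ⟩ := exists_perm_pairs [(t0, a), (t1, b), (t2, c), (t3, d)]
      (by simp [ht.1, ht.2.1, ht.2.2.1, ht.2.2.2.1, ht.2.2.2.2.1, ht.2.2.2.2.2])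
      (by simp [hab, hac, had, hbc, hbd, hcd])
    have e0 : σ t0 = a := hσ (t0, a) (by simp)
    have e1 : σ t1 = b := hσ (t1, b) (by simp)
    have e2 : σ t2 = c := hσ (t2, c) (by simp)
    have e3 : σ t3 = d := hσ (t3, d) (by simp)
    rw [hq4, ← e0, ← e1, ← e2, ← e3, wN_comp]

  -- generic erase-sum lemmas
  have eE : ∀ (i : Fin k) (g : Fin k → ℝ),
      ∑ x ∈ Finset.univ.erase i, g x = (∑ x, g x) - g i := by
    intro i g
    have h := Finset.add_sum_erase Finset.univ g (Finset.mem_univ i)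
    linarith
  have eE2 : ∀ (i i' : Fin k), i' ≠ i → ∀ g : Fin k → ℝ,
      ∑ x ∈ (Finset.univ.erase i).erase i', g x = (∑ x, g x) - g i - g i' := by
    intro i i' h g
    have h1 := Finset.add_sum_erase _ g (Finset.mem_erase.mpr ⟨h, Finset.mem_univ i'⟩)
    rw [eE i g] at h1
    linarith
  have eE3 : ∀ (i j i' : Fin k), j ≠ i → i' ≠ i → i' ≠ j → ∀ g : Fin k → ℝ,
      ∑ x ∈ ((Finset.univ.erase i).erase j).erase i', g x
        = (∑ x, g x) - g i - g j - g i' := by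
    intro i j i' hji h1 h2 g
    have hmem : i' ∈ (Finset.univ.erase i).erase j :=
      Finset.mem_erase.mpr ⟨h2, Finset.mem_erase.mpr ⟨h1, Finset.mem_univ i'⟩⟩
    have h3 := Finset.add_sum_erase _ g hmem
    rw [eE2 i j hji g] at h3
    linarith
  have hfold : ∀ (s : Finset (Fin k)) (c1 c2 c3 : ℝ),
      ∑ x ∈ s, (c1 * δ x + c2 * (δ x * δ x) + c3 * (δ x * δ x * δ x))
        = c1 * (∑ x ∈ s, δ x) + c2 * (∑ x ∈ s, δ x * δ x)
          + c3 * (∑ x ∈ s, δ x * δ x * δ x) := by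
    intro s c1 c2 c3
    rw [Finset.sum_add_distrib, Finset.sum_add_distrib, Finset.mul_sum, Finset.mul_sum,
      Finset.mul_sum]
  have hfold4 : ∀ c1 c2 c3 c4 : ℝ,
      ∑ x : Fin k, (c1 * δ x + c2 * (δ x * δ x) + c3 * (δ x * δ x * δ x)
          + c4 * (δ x * δ x * (δ x * δ x)))
        = c2 * p2 + c3 * p3 + c4 * p4 := by
    intro c1 c2 c3 c4
    rw [Finset.sum_add_distrib, Finset.sum_add_distrib, Finset.sum_add_distrib,
      ← Finset.mul_sum, ← Finset.mul_sum, ← Finset.mul_sum, ← Finset.mul_sum,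
      hsum, ← hp2, ← hp3, ← hp4]
    ring
  -- the decomposition of the inner triple sum, for each i
  have hsplit : ∀ i : Fin k,
      (∑ j : Fin k, ∑ i' : Fin k, ∑ j' : Fin k,
          (wN k L i j i' j' : ℝ) * (δ i * δ j * (δ i' * δ j')))
      = (∑ i' ∈ Finset.univ.erase i,
            ((wN k L i i i' i' : ℝ) * (δ i * δ i * (δ i' * δ i'))
              + ∑ j' ∈ (Finset.univ.erase i).erase i',
                  qB * (δ i * δ i * (δ i' * δ j'))))
        + ∑ j ∈ Finset.univ.erase i,
            ∑ i' ∈ (Finset.univ.erase i).erase j,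
              (qC * (δ i * δ j * (δ i' * δ i'))
                + ∑ j' ∈ ((Finset.univ.erase i).erase j).erase i',
                    q4 * (δ i * δ j * (δ i' * δ j'))) := by
    intro i
    rw [← Finset.add_sum_erase _ _ (Finset.mem_univ i)]
    congr 1
    · -- the j = i block
      rw [← Finset.add_sum_erase _ _ (Finset.mem_univ i)]
      have hz : (∑ j' : Fin k, (wN k L i i i j' : ℝ) * (δ i * δ i * (δ i * δ j'))) = 0 :=
        Finset.sum_eq_zero fun j' _ => by
          rw [wN_zero i i i j' (fun f => by rintro ⟨-, -, h3⟩; exact h3 rfl),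
            Nat.cast_zero, zero_mul]
      rw [hz, zero_add]
      refine Finset.sum_congr rfl fun i' hi' => ?_
      have hii' : i' ≠ i := (Finset.mem_erase.mp hi').1
      rw [← Finset.add_sum_erase _ _ (Finset.mem_univ i)]
      rw [wN_zero i i i' i (fun f => by rintro ⟨-, h2, h3⟩; exact h3 h2.symm),
        Nat.cast_zero, zero_mul, zero_add]
      rw [← Finset.add_sum_erase _ _ (Finset.mem_erase.mpr ⟨hii', Finset.mem_univ i'⟩)]
      congr 1
      refine Finset.sum_congr rfl fun j' hj' => ?_
      have hj1 : j' ≠ i' := (Finset.mem_erase.mp hj').1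
      have hj2 : j' ≠ i := (Finset.mem_erase.mp (Finset.mem_erase.mp hj').2).1
      rw [hconstB i i' j' (Ne.symm hii') (Ne.symm hj2) (Ne.symm hj1)]
    · -- the j ≠ i block
      refine Finset.sum_congr rfl fun j hj => ?_
      have hji : j ≠ i := (Finset.mem_erase.mp hj).1
      rw [← Finset.add_sum_erase _ _ (Finset.mem_univ i)]
      have hz1 : (∑ j' : Fin k, (wN k L i j i j' : ℝ) * (δ i * δ j * (δ i * δ j'))) = 0 :=
        Finset.sum_eq_zero fun j' _ => by
          rw [wN_zero i j i j' (fun f => by rintro ⟨-, -, h3⟩; exact h3 rfl),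
            Nat.cast_zero, zero_mul]
      rw [hz1, zero_add]
      rw [← Finset.add_sum_erase _ _ (Finset.mem_erase.mpr ⟨hji, Finset.mem_univ j⟩)]
      have hz2 : (∑ j' : Fin k, (wN k L i j j j' : ℝ) * (δ i * δ j * (δ j * δ j'))) = 0 :=
        Finset.sum_eq_zero fun j' _ => by
          rw [wN_zero i j j j' (fun f => by rintro ⟨h1, -, h3⟩; exact h3 h1),
            Nat.cast_zero, zero_mul]
      rw [hz2, zero_add]
      refine Finset.sum_congr rfl fun i' hi' => ?_
      have hi'j : i' ≠ j := (Finset.mem_erase.mp hi').1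
      have hi'i : i' ≠ i := (Finset.mem_erase.mp (Finset.mem_erase.mp hi').2).1
      rw [← Finset.add_sum_erase _ _ (Finset.mem_univ i)]
      rw [wN_zero i j i' i (fun f => by rintro ⟨-, h2, h3⟩; exact h3 h2.symm),
        Nat.cast_zero, zero_mul, zero_add]
      rw [← Finset.add_sum_erase _ _ (Finset.mem_erase.mpr ⟨hji, Finset.mem_univ j⟩)]
      rw [wN_zero i j i' j (fun f => by rintro ⟨h1, h2, h3⟩; exact h3 (h1.trans h2.symm)),
        Nat.cast_zero, zero_mul, zero_add]
      rw [← Finset.add_sum_erase _ _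
        (Finset.mem_erase.mpr ⟨hi'j, Finset.mem_erase.mpr ⟨hi'i, Finset.mem_univ i'⟩⟩)]
      congr 1
      · rw [hconstC i j i' (Ne.symm hji) (Ne.symm hi'i) (Ne.symm hi'j)]
      · refine Finset.sum_congr rfl fun j' hj' => ?_
        have hj'1 : j' ≠ i' := (Finset.mem_erase.mp hj').1
        have hj'2 : j' ≠ j := (Finset.mem_erase.mp (Finset.mem_erase.mp hj').2).1
        have hj'3 : j' ≠ i :=
          (Finset.mem_erase.mp (Finset.mem_erase.mp (Finset.mem_erase.mp hj').2).2).1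
        rw [hconst4 i j i' j' (Ne.symm hji) (Ne.symm hi'i) (Ne.symm hj'3)
          (Ne.symm hi'j) (Ne.symm hj'2) (Ne.symm hj'1)]
  -- the four pieces
  have hTA : (∑ i : Fin k, ∑ i' ∈ Finset.univ.erase i,
        (wN k L i i i' i' : ℝ) * (δ i * δ i * (δ i' * δ i'))) ≤ N * (p2 * p2) := by
    calc ∑ i : Fin k, ∑ i' ∈ Finset.univ.erase i,
          (wN k L i i i' i' : ℝ) * (δ i * δ i * (δ i' * δ i'))
        ≤ ∑ i : Fin k, ∑ i' ∈ Finset.univ.erase i, N * (δ i * δ i * (δ i' * δ i')) := by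
          refine Finset.sum_le_sum fun i _ => Finset.sum_le_sum fun i' _ => ?_
          exact mul_le_mul_of_nonneg_right (wN_le _ _ _ _)
            (mul_nonneg (mul_self_nonneg _) (mul_self_nonneg _))
      _ ≤ ∑ i : Fin k, ∑ i' : Fin k, N * (δ i * δ i * (δ i' * δ i')) := by
          refine Finset.sum_le_sum fun i _ => ?_
          refine Finset.sum_le_sum_of_subset_of_nonneg (Finset.erase_subset _ _)
            fun i' _ _ => ?_
          exact mul_nonneg hN0 (mul_nonneg (mul_self_nonneg _) (mul_self_nonneg _))
      _ = N * (p2 * p2) := by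
          calc ∑ i : Fin k, ∑ i' : Fin k, N * (δ i * δ i * (δ i' * δ i'))
              = ∑ i : Fin k, (N * (δ i * δ i)) * p2 := by
                refine Finset.sum_congr rfl fun i _ => ?_
                rw [hp2, Finset.mul_sum]
                exact Finset.sum_congr rfl fun i' _ => by ring
            _ = N * (p2 * p2) := by
                rw [← Finset.sum_mul, ← Finset.mul_sum, ← hp2]; ring
  have hTB : (∑ i : Fin k, ∑ i' ∈ Finset.univ.erase i,
        ∑ j' ∈ (Finset.univ.erase i).erase i', qB * (δ i * δ i * (δ i' * δ j')))
      = qB * (2 * p4 - p2 * p2) := by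
    calc ∑ i : Fin k, ∑ i' ∈ Finset.univ.erase i,
          ∑ j' ∈ (Finset.univ.erase i).erase i', qB * (δ i * δ i * (δ i' * δ j'))
        = ∑ i : Fin k,
            ∑ i' ∈ Finset.univ.erase i,
              ((-(qB * (δ i * δ i * δ i))) * δ i'
                + (-(qB * (δ i * δ i))) * (δ i' * δ i') + 0 * (δ i' * δ i' * δ i')) := by
          refine Finset.sum_congr rfl fun i _ => Finset.sum_congr rfl fun i' hi' => ?_
          have hii' : i' ≠ i := (Finset.mem_erase.mp hi').1
          rw [show (∑ j' ∈ (Finset.univ.erase i).erase i', qB * (δ i * δ i * (δ i' * δ j')))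
              = (qB * (δ i * δ i * δ i')) * ∑ j' ∈ (Finset.univ.erase i).erase i', δ j' from by
            rw [Finset.mul_sum]; exact Finset.sum_congr rfl fun j' _ => by ring]
          rw [eE2 i i' hii' δ, hsum]
          ring
      _ = ∑ i : Fin k, (0 * δ i + (-(qB * p2)) * (δ i * δ i) + 0 * (δ i * δ i * δ i)
            + (2 * qB) * (δ i * δ i * (δ i * δ i))) := by
          refine Finset.sum_congr rfl fun i _ => ?_
          rw [hfold, eE i δ, eE i (fun x => δ x * δ x), hsum, ← hp2]
          ring
      _ = qB * (2 * p4 - p2 * p2) := by rw [hfold4]; ring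
  have hTC : (∑ i : Fin k, ∑ j ∈ Finset.univ.erase i,
        ∑ i' ∈ (Finset.univ.erase i).erase j, qC * (δ i * δ j * (δ i' * δ i')))
      = qC * (2 * p4 - p2 * p2) := by
    calc ∑ i : Fin k, ∑ j ∈ Finset.univ.erase i,
          ∑ i' ∈ (Finset.univ.erase i).erase j, qC * (δ i * δ j * (δ i' * δ i'))
        = ∑ i : Fin k, ∑ j ∈ Finset.univ.erase i,
            ((qC * δ i * (p2 - δ i * δ i)) * δ j + 0 * (δ j * δ j)
              + (-(qC * δ i)) * (δ j * δ j * δ j)) := by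
          refine Finset.sum_congr rfl fun i _ => Finset.sum_congr rfl fun j hj => ?_
          have hji : j ≠ i := (Finset.mem_erase.mp hj).1
          rw [show (∑ i' ∈ (Finset.univ.erase i).erase j, qC * (δ i * δ j * (δ i' * δ i')))
              = (qC * (δ i * δ j)) * ∑ i' ∈ (Finset.univ.erase i).erase j, δ i' * δ i' from by
            rw [Finset.mul_sum]; exact Finset.sum_congr rfl fun i' _ => by ring]
          rw [eE2 i j hji (fun x => δ x * δ x), ← hp2]
          ring
      _ = ∑ i : Fin k, ((-(qC * p3)) * δ i + (-(qC * p2)) * (δ i * δ i)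
            + 0 * (δ i * δ i * δ i) + (2 * qC) * (δ i * δ i * (δ i * δ i))) := by
          refine Finset.sum_congr rfl fun i _ => ?_
          rw [hfold, eE i δ, eE i (fun x => δ x * δ x), eE i (fun x => δ x * δ x * δ x),
            hsum, ← hp2, ← hp3]
          ring
      _ = qC * (2 * p4 - p2 * p2) := by rw [hfold4]; ring
  have hTD : (∑ i : Fin k, ∑ j ∈ Finset.univ.erase i,
        ∑ i' ∈ (Finset.univ.erase i).erase j,
          ∑ j' ∈ ((Finset.univ.erase i).erase j).erase i', q4 * (δ i * δ j * (δ i' * δ j')))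
      = q4 * (3 * (p2 * p2) - 6 * p4) := by
    calc ∑ i : Fin k, ∑ j ∈ Finset.univ.erase i,
          ∑ i' ∈ (Finset.univ.erase i).erase j,
            ∑ j' ∈ ((Finset.univ.erase i).erase j).erase i', q4 * (δ i * δ j * (δ i' * δ j'))
        = ∑ i : Fin k, ∑ j ∈ Finset.univ.erase i,
            ∑ i' ∈ (Finset.univ.erase i).erase j,
              ((q4 * (δ i * δ j) * (0 - δ i - δ j)) * δ i'
                + (-(q4 * (δ i * δ j))) * (δ i' * δ i') + 0 * (δ i' * δ i' * δ i')) := by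
          refine Finset.sum_congr rfl fun i _ => Finset.sum_congr rfl fun j hj =>
            Finset.sum_congr rfl fun i' hi' => ?_
          have hji : j ≠ i := (Finset.mem_erase.mp hj).1
          have hi'j : i' ≠ j := (Finset.mem_erase.mp hi').1
          have hi'i : i' ≠ i := (Finset.mem_erase.mp (Finset.mem_erase.mp hi').2).1
          rw [show (∑ j' ∈ ((Finset.univ.erase i).erase j).erase i',
                q4 * (δ i * δ j * (δ i' * δ j')))
              = (q4 * (δ i * δ j * δ i'))
                  * ∑ j' ∈ ((Finset.univ.erase i).erase j).erase i', δ j' from by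
            rw [Finset.mul_sum]; exact Finset.sum_congr rfl fun j' _ => by ring]
          rw [eE3 i j i' hji hi'i hi'j δ, hsum]
          ring
      _ = ∑ i : Fin k, ∑ j ∈ Finset.univ.erase i,
            ((q4 * δ i * (2 * (δ i * δ i) - p2)) * δ j
              + (2 * q4 * (δ i * δ i)) * (δ j * δ j) + (2 * q4 * δ i) * (δ j * δ j * δ j)) := by
          refine Finset.sum_congr rfl fun i _ => Finset.sum_congr rfl fun j hj => ?_
          have hji : j ≠ i := (Finset.mem_erase.mp hj).1
          rw [hfold, eE2 i j hji δ, eE2 i j hji (fun x => δ x * δ x), hsum, ← hp2]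
          ring
      _ = ∑ i : Fin k, ((2 * q4 * p3) * δ i + (3 * q4 * p2) * (δ i * δ i)
            + 0 * (δ i * δ i * δ i) + (-(6 * q4)) * (δ i * δ i * (δ i * δ i))) := by
          refine Finset.sum_congr rfl fun i _ => ?_
          rw [hfold, eE i δ, eE i (fun x => δ x * δ x), eE i (fun x => δ x * δ x * δ x),
            hsum, ← hp2, ← hp3]
          ring
      _ = q4 * (3 * (p2 * p2) - 6 * p4) := by rw [hfold4]; ring
  -- put the pieces together
  calc ∑ i : Fin k, ∑ j : Fin k, ∑ i' : Fin k, ∑ j' : Fin k,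
        (wN k L i j i' j' : ℝ) * (δ i * δ j * (δ i' * δ j'))
      = (∑ i : Fin k, ∑ i' ∈ Finset.univ.erase i,
            (wN k L i i i' i' : ℝ) * (δ i * δ i * (δ i' * δ i')))
        + (∑ i : Fin k, ∑ i' ∈ Finset.univ.erase i,
            ∑ j' ∈ (Finset.univ.erase i).erase i', qB * (δ i * δ i * (δ i' * δ j')))
        + ((∑ i : Fin k, ∑ j ∈ Finset.univ.erase i,
            ∑ i' ∈ (Finset.univ.erase i).erase j, qC * (δ i * δ j * (δ i' * δ i')))
          + ∑ i : Fin k, ∑ j ∈ Finset.univ.erase i,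
              ∑ i' ∈ (Finset.univ.erase i).erase j,
                ∑ j' ∈ ((Finset.univ.erase i).erase j).erase i',
                  q4 * (δ i * δ j * (δ i' * δ j'))) := by
        rw [Finset.sum_congr rfl fun i _ => hsplit i]
        simp only [Finset.sum_add_distrib]
    _ ≤ 8 * N * p2 ^ 2 := by
        rw [hTB, hTC, hTD]
        nlinarith [hTA, hqBnn, hqCnn, hq4nn, hqBle, hqCle, hq4le, hp42, hp4nn, hp2nn, hN0,
          mul_nonneg hqBnn hp4nn, mul_nonneg hqCnn hp4nn, mul_nonneg hq4nn hp2nn]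

end

/-- There is an absolute constant `C' > 0` such that for all `2 ≤ L < k` with `L ∣ k` and
every `δ : Fin k → ℝ` summing to `0`, a uniformly random balanced `L`-coloring `f` satisfies
`∑_{r < r'} E[Z_r² Z_{r'}²] ≤ C'·‖δ‖₂⁴`, where `Z_r = ∑_{i : f i = r} δ_i`. -/
theorem random_flattening_cross_terms :
    ∃ C' : ℝ, 0 < C' ∧
      ∀ (k L : ℕ), 2 ≤ L → L < k → L ∣ k →
        ∀ δ : Fin k → ℝ, (∑ i, δ i = 0) →
          ∑ r : Fin L, ∑ r' : Fin L,
              (if r < r' then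
                (∑ f ∈ balancedColorings k L, partSum δ f r ^ 2 * partSum δ f r' ^ 2)
                  / ((balancedColorings k L).card : ℝ)
              else 0)
            ≤ C' * (∑ i, δ i ^ 2) ^ 2 := by
  refine ⟨8, by norm_num, ?_⟩
  intro k L hL2 hLk hdvd δ hsum
  have hk4 : 4 ≤ k := by
    obtain ⟨c, rfl⟩ := hdvd
    rcases Nat.lt_or_ge c 2 with h | h
    · interval_cases c <;> omega
    · exact le_trans (by norm_num) (Nat.mul_le_mul hL2 h)
  have hsq : (∑ i, δ i * δ i) = ∑ i, δ i ^ 2 :=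
    Finset.sum_congr rfl fun i _ => (pow_two (δ i)).symm
  set N : ℝ := ((balancedColorings k L).card : ℝ) with hN
  have hN0 : (0:ℝ) ≤ N := Nat.cast_nonneg _
  have hstep1 :
      (∑ r : Fin L, ∑ r' : Fin L,
        (if r < r' then
          (∑ f ∈ balancedColorings k L, partSum δ f r ^ 2 * partSum δ f r' ^ 2) / N
        else 0))
      ≤ ∑ r : Fin L, ∑ r' : Fin L,
        (if r ≠ r' then
          (∑ f ∈ balancedColorings k L, partSum δ f r ^ 2 * partSum δ f r' ^ 2) / N
        else 0) := by
    refine Finset.sum_le_sum fun r _ => Finset.sum_le_sum fun r' _ => ?_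
    by_cases h : r < r'
    · rw [if_pos h, if_pos h.ne]
    · rw [if_neg h]
      by_cases h' : r ≠ r'
      · rw [if_pos h']
        exact div_nonneg (Finset.sum_nonneg fun f _ =>
          mul_nonneg (sq_nonneg _) (sq_nonneg _)) hN0
      · rw [if_neg h']
  have hstep2 :
      (∑ r : Fin L, ∑ r' : Fin L,
        (if r ≠ r' then
          (∑ f ∈ balancedColorings k L, partSum δ f r ^ 2 * partSum δ f r' ^ 2) / N
        else 0))
      = (∑ f ∈ balancedColorings k L, ∑ r : Fin L, ∑ r' : Fin L,
          (if r ≠ r' then partSum δ f r ^ 2 * partSum δ f r' ^ 2 else 0)) / N := by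
    calc ∑ r : Fin L, ∑ r' : Fin L,
          (if r ≠ r' then
            (∑ f ∈ balancedColorings k L, partSum δ f r ^ 2 * partSum δ f r' ^ 2) / N
          else 0)
        = ∑ r : Fin L, ∑ r' : Fin L,
            (if r ≠ r' then
              (∑ f ∈ balancedColorings k L, partSum δ f r ^ 2 * partSum δ f r' ^ 2)
            else 0) / N := by
          refine Finset.sum_congr rfl fun r _ => Finset.sum_congr rfl fun r' _ => ?_
          by_cases h : r ≠ r'
          · rw [if_pos h, if_pos h]
          · rw [if_neg h, if_neg h, zero_div]
      _ = (∑ r : Fin L, ∑ r' : Fin L,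
            (if r ≠ r' then
              (∑ f ∈ balancedColorings k L, partSum δ f r ^ 2 * partSum δ f r' ^ 2)
            else 0)) / N := by
          rw [Finset.sum_div]
          exact Finset.sum_congr rfl fun r _ => (Finset.sum_div _ _ _).symm
      _ = (∑ r : Fin L, ∑ r' : Fin L, ∑ f ∈ balancedColorings k L,
            (if r ≠ r' then partSum δ f r ^ 2 * partSum δ f r' ^ 2 else 0)) / N := by
          congr 1
          refine Finset.sum_congr rfl fun r _ => Finset.sum_congr rfl fun r' _ => ?_
          by_cases h : r ≠ r'
          · rw [if_pos h]
            exact Finset.sum_congr rfl fun f _ => (if_pos h).symm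
          · rw [if_neg h]
            exact (Finset.sum_eq_zero fun f _ => if_neg h).symm
      _ = (∑ f ∈ balancedColorings k L, ∑ r : Fin L, ∑ r' : Fin L,
            (if r ≠ r' then partSum δ f r ^ 2 * partSum δ f r' ^ 2 else 0)) / N := by
          congr 1
          rw [Finset.sum_congr rfl fun r _ => Finset.sum_comm]
          exact Finset.sum_comm
  have hstep3 :
      (∑ f ∈ balancedColorings k L, ∑ r : Fin L, ∑ r' : Fin L,
        (if r ≠ r' then partSum δ f r ^ 2 * partSum δ f r' ^ 2 else 0))
      = ∑ i : Fin k, ∑ j : Fin k, ∑ i' : Fin k, ∑ j' : Fin k,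
          (wN k L i j i' j' : ℝ) * (δ i * δ j * (δ i' * δ j')) := by
    rw [Finset.sum_congr rfl fun f _ => claim_f δ f]
    exact sum_over_colorings δ
  have hTb := T_bound (L := L) hk4 δ hsum
  have hdiv :
      (∑ i : Fin k, ∑ j : Fin k, ∑ i' : Fin k, ∑ j' : Fin k,
        (wN k L i j i' j' : ℝ) * (δ i * δ j * (δ i' * δ j'))) / N
      ≤ 8 * (∑ i, δ i ^ 2) ^ 2 := by
    by_cases hN0' : N = 0
    · rw [hN0', div_zero]
      positivity
    · have hpos : (0:ℝ) < N := lt_of_le_of_ne hN0 (Ne.symm hN0')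
      rw [div_le_iff₀ hpos]
      calc ∑ i : Fin k, ∑ j : Fin k, ∑ i' : Fin k, ∑ j' : Fin k,
            (wN k L i j i' j' : ℝ) * (δ i * δ j * (δ i' * δ j'))
          ≤ 8 * N * (∑ i, δ i * δ i) ^ 2 := hTb
        _ = 8 * (∑ i, δ i ^ 2) ^ 2 * N := by rw [hsq]; ring
  calc ∑ r : Fin L, ∑ r' : Fin L,
        (if r < r' then
          (∑ f ∈ balancedColorings k L, partSum δ f r ^ 2 * partSum δ f r' ^ 2) / N
        else 0)
      ≤ ∑ r : Fin L, ∑ r' : Fin L,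
        (if r ≠ r' then
          (∑ f ∈ balancedColorings k L, partSum δ f r ^ 2 * partSum δ f r' ^ 2) / N
        else 0) := hstep1
    _ = (∑ i : Fin k, ∑ j : Fin k, ∑ i' : Fin k, ∑ j' : Fin k,
          (wN k L i j i' j' : ℝ) * (δ i * δ j * (δ i' * δ j'))) / N := by
        rw [hstep2, hstep3]
    _ ≤ 8 * (∑ i, δ i ^ 2) ^ 2 := hdiv
end
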